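/- For the hard-core model on the 2K×3L triangular grid Λ, there exists a path ω* from a to b in X whose height satisfies Φ_{ω*} − H(a) = min{K, 2L} + 1. -/

import Mathlib

open Finset

variable (K L : ℕ) [NeZero K] [NeZero L]

/-- Vertices of the `2K × 3L` triangular grid: pairs `(i,j) ∈ (ℤ/2K) × (ℤ/6L)` with `i+j` even. -/
abbrev Vert (K L : ℕ) [NeZero K] [NeZero L] : Type :=
  {p : ZMod (2 * K) × ZMod (6 * L) // (p.1.val + p.2.val) % 2 = 0}

/-- Adjacency in the triangular grid with periodic boundary conditions. -/
abbrev Adj (v w : Vert K L) : Prop :=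
  (w.1.1 = v.1.1 ∧ (w.1.2 = v.1.2 + 2 ∨ w.1.2 = v.1.2 - 2)) ∨
  ((w.1.1 = v.1.1 + 1 ∨ w.1.1 = v.1.1 - 1) ∧ (w.1.2 = v.1.2 + 1 ∨ w.1.2 = v.1.2 - 1))

/-- A particle configuration on the grid. -/
abbrev Cfg (K L : ℕ) [NeZero K] [NeZero L] : Type := Vert K L → Bool

/-- Hard-core condition: no two adjacent occupied sites. -/
abbrev HardCore (σ : Cfg K L) : Prop :=
  ∀ v w : Vert K L, Adj K L v w → ¬(σ v = true ∧ σ w = true)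

/-- Number of particles of a configuration. -/
def nParticles (σ : Cfg K L) : ℕ := (univ.filter fun v => σ v = true).card

/-- The energy (Hamiltonian) `H(σ) = -Σ_v σ(v)`. -/
def energy (σ : Cfg K L) : ℤ := -(nParticles K L σ : ℤ)

/-- The configuration `a`: indicator of `Λ_a` (columns `j ≡ 0 (mod 3)`). -/
def confA : Cfg K L := fun v => decide (v.1.2.val % 3 = 0)

/-- The configuration `b`: indicator of `Λ_b` (columns `j ≡ 1 (mod 3)`). -/
def confB : Cfg K L := fun v => decide (v.1.2.val % 3 = 1)

/-- The configuration `c`: indicator of `Λ_c` (columns `j ≡ 2 (mod 3)`). -/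
def confC : Cfg K L := fun v => decide (v.1.2.val % 3 = 2)

/-- A path in the energy landscape: a finite sequence of hard-core configurations,
consecutive ones differing in at most one vertex. -/
structure HCPath (σ σ' : Cfg K L) where
  n : ℕ
  ω : Fin (n + 1) → Cfg K L
  first : ω 0 = σ
  last : ω (Fin.last n) = σ'
  hc : ∀ i, HardCore K L (ω i)
  step : ∀ i : Fin n,
    ((univ : Finset (Vert K L)).filter fun v => ω i.castSucc v ≠ ω i.succ v).card ≤ 1

/-- Height of a path: maximal energy along it. -/
noncomputable def pathHeight {σ σ' : Cfg K L} (p : HCPath K L σ σ') : ℤ :=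
  Finset.univ.sup' Finset.univ_nonempty fun i => energy K L (p.ω i)

/-- Communication height `Φ(σ,σ')`: minimal height over all paths from `σ` to `σ'`. -/
noncomputable def commHeight (σ σ' : Cfg K L) : ℤ :=
  sInf {h : ℤ | ∃ p : HCPath K L σ σ', pathHeight K L p = h}

/-- The horizontal stripe `S_i = r_{2i} ∪ r_{2i+1}`. -/
abbrev inHStripe (i : ℕ) (v : Vert K L) : Prop :=
  v.1.1 = ((2 * i : ℕ) : ZMod (2 * K)) ∨ v.1.1 = ((2 * i + 1 : ℕ) : ZMod (2 * K))

/-- The vertical stripe `C_j = c_j ∪ c_{j+1} ∪ c_{j+2}` (column indices mod `6L`). -/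
abbrev inVStripe (j : ℕ) (v : Vert K L) : Prop :=
  v.1.2 = ((j : ℕ) : ZMod (6 * L)) ∨ v.1.2 = ((j + 1 : ℕ) : ZMod (6 * L)) ∨
    v.1.2 = ((j + 2 : ℕ) : ZMod (6 * L))

/-- Two configurations agree on a region. -/
def agreesOn (P : Vert K L → Prop) (σ τ : Cfg K L) : Prop := ∀ v, P v → σ v = τ v

/-!
Both paths turn `a` into `b` one site at a time: site `v` flips at time `T v`, and an `a`-particle
always leaves before any adjacent `b`-particle arrives, so every configuration on the way is
hard-core. Each `a`-site `v` has a `b`-neighbour `p v`, and except for the first `m` sites to be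
emptied, `p v` is filled right after `v` is emptied. So the particle deficit is at most `m + 1` at
any time (the first `m` sites and the one emptied last), and it equals `m + 1` once the first
`m + 1` sites are empty, since no `b`-site is filled before that. Sweeping column by column gives
`m = K` (column `0` must be emptied first), sweeping row by row gives `m = 2L` (rows `0` and `1`);
take the cheaper sweep.
-/

instance : NeZero (2 * K) := ⟨by have := NeZero.ne K; omega⟩
instance : NeZero (6 * L) := ⟨by have := NeZero.ne L; omega⟩

theorem ZMod.val_add_natCast_eq_or {n : ℕ} [NeZero n] (x : ZMod n) {a : ℕ} (ha : a < n) :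
    (x + a).val = x.val + a ∨ (x + a).val + n = x.val + a := by
  rcases lt_or_ge (x.val + (a : ZMod n).val) n with h | h
  · left
    rw [ZMod.val_add_of_lt h, ZMod.val_natCast_of_lt ha]
  · right
    have := ZMod.val_add_val_of_le h
    rw [ZMod.val_natCast_of_lt ha] at this
    omega

theorem ZMod.val_cases_of_eq_add_or_eq_sub {n : ℕ} [NeZero n] {x y : ZMod n} {a : ℕ}
    (ha : a < n) (h : y = x + a ∨ y = x - (a : ZMod n)) :
    y.val = x.val + a ∨ y.val + n = x.val + a ∨
      x.val = y.val + a ∨ x.val + n = y.val + a := by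
  rcases h with rfl | rfl
  · have := ZMod.val_add_natCast_eq_or x ha
    omega
  · have := ZMod.val_add_natCast_eq_or (x - (a : ZMod n)) ha
    rw [sub_add_cancel] at this
    omega

section Grid

variable {K L}

theorem vert_ext {v w : Vert K L} (hi : v.1.1.val = w.1.1.val) (hj : v.1.2.val = w.1.2.val) :
    v = w :=
  Subtype.ext (Prod.ext (ZMod.val_injective _ hi) (ZMod.val_injective _ hj))

theorem Vert.parity (v : Vert K L) : (v.1.1.val + v.1.2.val) % 2 = 0 := v.2

theorem Vert.row_lt (v : Vert K L) : v.1.1.val < 2 * K := ZMod.val_lt _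

theorem Vert.col_lt (v : Vert K L) : v.1.2.val < 6 * L := ZMod.val_lt _

theorem exists_vert {i j : ℕ} (hi : i < 2 * K) (hj : j < 6 * L) (hij : (i + j) % 2 = 0) :
    ∃ v : Vert K L, v.1.1.val = i ∧ v.1.2.val = j :=
  ⟨⟨((i : ZMod (2 * K)), (j : ZMod (6 * L))), by
    rwa [ZMod.val_natCast_of_lt hi, ZMod.val_natCast_of_lt hj]⟩,
    ZMod.val_natCast_of_lt hi, ZMod.val_natCast_of_lt hj⟩

theorem confA_eq_true_iff (v : Vert K L) : confA K L v = true ↔ v.1.2.val % 3 = 0 := by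
  simp [confA]

theorem confB_eq_true_iff (v : Vert K L) : confB K L v = true ↔ v.1.2.val % 3 = 1 := by
  simp [confB]

theorem confA_ne_confB_iff (v : Vert K L) :
    confA K L v ≠ confB K L v ↔ v.1.2.val % 3 ≠ 2 := by
  simp only [confA, confB, ne_eq, decide_eq_decide]
  omega

theorem Adj.val_cases {v w : Vert K L} (h : Adj K L v w) :
    (w.1.1.val = v.1.1.val ∧
      (w.1.2.val = v.1.2.val + 2 ∨ w.1.2.val + 6 * L = v.1.2.val + 2 ∨
        v.1.2.val = w.1.2.val + 2 ∨ v.1.2.val + 6 * L = w.1.2.val + 2)) ∨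
    ((w.1.1.val = v.1.1.val + 1 ∨ w.1.1.val + 2 * K = v.1.1.val + 1 ∨
        v.1.1.val = w.1.1.val + 1 ∨ v.1.1.val + 2 * K = w.1.1.val + 1) ∧
      (w.1.2.val = v.1.2.val + 1 ∨ w.1.2.val + 6 * L = v.1.2.val + 1 ∨
        v.1.2.val = w.1.2.val + 1 ∨ v.1.2.val + 6 * L = w.1.2.val + 1)) := by
  have := NeZero.ne K
  have := NeZero.ne L
  rcases h with ⟨hi, hj⟩ | ⟨hi, hj⟩
  · exact Or.inl ⟨by rw [hi], ZMod.val_cases_of_eq_add_or_eq_sub (a := 2) (by omega)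
      (by simpa using hj)⟩
  · exact Or.inr ⟨ZMod.val_cases_of_eq_add_or_eq_sub (a := 1) (by omega) (by simpa using hi),
      ZMod.val_cases_of_eq_add_or_eq_sub (a := 1) (by omega) (by simpa using hj)⟩

theorem Adj.symm {v w : Vert K L} (h : Adj K L v w) : Adj K L w v := by
  rcases h with ⟨hi, hj | hj⟩ | ⟨hi | hi, hj | hj⟩
  · exact Or.inl ⟨hi.symm, Or.inr (by rw [hj]; ring)⟩
  · exact Or.inl ⟨hi.symm, Or.inl (by rw [hj]; ring)⟩
  · exact Or.inr ⟨Or.inr (by rw [hi]; ring), Or.inr (by rw [hj]; ring)⟩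
  · exact Or.inr ⟨Or.inr (by rw [hi]; ring), Or.inl (by rw [hj]; ring)⟩
  · exact Or.inr ⟨Or.inl (by rw [hi]; ring), Or.inr (by rw [hj]; ring)⟩
  · exact Or.inr ⟨Or.inl (by rw [hi]; ring), Or.inl (by rw [hj]; ring)⟩

theorem Adj.col_mod_three_ne {v w : Vert K L} (h : Adj K L v w) :
    v.1.2.val % 3 ≠ w.1.2.val % 3 := by
  have := h.val_cases
  omega

theorem hardCore_confA : HardCore K L (confA K L) := by
  intro v w h ⟨hv, hw⟩
  rw [confA_eq_true_iff] at hv hw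
  exact h.col_mod_three_ne (hv.trans hw.symm)

theorem hardCore_confB : HardCore K L (confB K L) := by
  intro v w h ⟨hv, hw⟩
  rw [confB_eq_true_iff] at hv hw
  exact h.col_mod_three_ne (hv.trans hw.symm)

theorem not_confA_and_confB (v : Vert K L) : ¬(confA K L v = true ∧ confB K L v = true) := by
  rw [confA_eq_true_iff, confB_eq_true_iff]
  omega

theorem confA_ne_confB_of_confA {v : Vert K L} (hv : confA K L v = true) :
    confA K L v ≠ confB K L v :=
  fun h => not_confA_and_confB v ⟨hv, h ▸ hv⟩

theorem confA_ne_confB_of_confB {v : Vert K L} (hv : confB K L v = true) :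
    confA K L v ≠ confB K L v :=
  fun h => not_confA_and_confB v ⟨h ▸ hv, hv⟩

theorem ZMod.val_add_natCast_mod_two {n : ℕ} [NeZero n] (hn : 2 ∣ n) (x : ZMod n) (a : ℕ) :
    (x + a).val % 2 = (x.val + a) % 2 := by
  rw [ZMod.val_add, ZMod.val_natCast, Nat.add_mod_mod, Nat.mod_mod_of_dvd _ hn]

def shift (a b : ℕ) (hab : (a + b) % 2 = 0) (v : Vert K L) : Vert K L :=
  ⟨(v.1.1 + a, v.1.2 + b), by
    have hi := ZMod.val_add_natCast_mod_two (dvd_mul_right 2 K) v.1.1 a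
    have hj := ZMod.val_add_natCast_mod_two ⟨3 * L, by ring⟩ v.1.2 b
    have := v.parity
    show ((v.1.1 + a).val + (v.1.2 + b).val) % 2 = 0
    omega⟩

theorem shift_injective (a b : ℕ) (hab : (a + b) % 2 = 0) :
    Function.Injective (shift (K := K) (L := L) a b hab) := by
  intro v w h
  simp only [shift, Subtype.mk.injEq, Prod.mk.injEq, add_left_inj] at h
  exact Subtype.ext (Prod.ext h.1 h.2)

theorem shift_row_val {a : ℕ} (b : ℕ) (hab : (a + b) % 2 = 0) (ha : a < 2 * K) (v : Vert K L) :
    (shift a b hab v).1.1.val = v.1.1.val + a ∨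
      (shift a b hab v).1.1.val + 2 * K = v.1.1.val + a :=
  ZMod.val_add_natCast_eq_or v.1.1 ha

theorem shift_col_val (a : ℕ) {b : ℕ} (hab : (a + b) % 2 = 0) (hb : b < 6 * L) (v : Vert K L) :
    (shift a b hab v).1.2.val = v.1.2.val + b ∨
      (shift a b hab v).1.2.val + 6 * L = v.1.2.val + b :=
  ZMod.val_add_natCast_eq_or v.1.2 hb

end Grid

structure Schedule where
  T : Vert K L → ℕ
  n : ℕ
  lt : ∀ v, confA K L v ≠ confB K L v → T v < n
  injOn : Set.InjOn T {v | confA K L v ≠ confB K L v}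
  le_of_adj : ∀ v w, Adj K L v w → confA K L v = true → confB K L w = true → T v ≤ T w

section Sweep

variable {K L}

def sweep (T : Vert K L → ℕ) (t : ℕ) : Cfg K L :=
  fun v => if T v < t then confB K L v else confA K L v

theorem sweep_zero (T : Vert K L → ℕ) : sweep T 0 = confA K L := by
  funext v
  simp [sweep]

theorem sweep_of_forall_lt {T : Vert K L → ℕ} {t : ℕ}
    (h : ∀ v, confA K L v ≠ confB K L v → T v < t) : sweep T t = confB K L := by
  funext v
  by_cases hv : T v < t
  · simp [sweep, hv]
  · simp only [sweep, if_neg hv]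
    by_contra hne
    exact hv (h v hne)

theorem sweep_eq_true_iff (T : Vert K L → ℕ) (t : ℕ) (v : Vert K L) :
    sweep T t v = true ↔
      (confA K L v = true ∧ t ≤ T v) ∨ (confB K L v = true ∧ T v < t) := by
  by_cases hv : T v < t
  · simp [sweep, hv]
  · simp [sweep, hv, le_of_not_gt hv]

namespace Schedule

variable (S : Schedule K L)

theorem hardCore_sweep (t : ℕ) : HardCore K L (sweep S.T t) := by
  intro v w h hvw
  rw [sweep_eq_true_iff, sweep_eq_true_iff] at hvw
  rcases hvw with ⟨⟨hv, hvt⟩ | ⟨hv, hvt⟩, ⟨hw, hwt⟩ | ⟨hw, hwt⟩⟩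
  · exact hardCore_confA v w h ⟨hv, hw⟩
  · have := S.le_of_adj v w h hv hw
    omega
  · have := S.le_of_adj w v h.symm hw hv
    omega
  · exact hardCore_confB v w h ⟨hv, hw⟩

theorem card_sweep_ne_sweep_succ_le_one (t : ℕ) :
    (univ.filter fun v => sweep S.T t v ≠ sweep S.T (t + 1) v).card ≤ 1 := by
  have changed : ∀ v, sweep S.T t v ≠ sweep S.T (t + 1) v →
      confA K L v ≠ confB K L v ∧ S.T v = t := by
    intro v hv
    simp only [sweep] at hv
    split_ifs at hv with h₁ h₂ h₂
    · exact absurd rfl hv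
    · omega
    · exact ⟨hv, by omega⟩
    · exact absurd rfl hv
  refine Finset.card_le_one.2 fun v hv w hw => ?_
  obtain ⟨hv, hvt⟩ := changed v (Finset.mem_filter.1 hv).2
  obtain ⟨hw, hwt⟩ := changed w (Finset.mem_filter.1 hw).2
  exact S.injOn hv hw (hvt.trans hwt.symm)

def toPath : HCPath K L (confA K L) (confB K L) where
  n := S.n
  ω t := sweep S.T t
  first := sweep_zero S.T
  last := sweep_of_forall_lt S.lt
  hc t := S.hardCore_sweep t
  step i := S.card_sweep_ne_sweep_succ_le_one i

end Schedule

end Sweep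

section Height

variable {K L}

theorem nParticles_confA_le_sweep_add (T : Vert K L → ℕ) (t : ℕ) {p : Vert K L → Vert K L}
    (hpB : ∀ v, confA K L v = true → confB K L (p v) = true) (hp : Function.Injective p) :
    nParticles K L (confA K L) ≤ nParticles K L (sweep T t) +
      (univ.filter fun v => confA K L v = true ∧ T v < t ∧ t ≤ T (p v)).card := by
  set bad := univ.filter fun v => confA K L v = true ∧ T v < t ∧ t ≤ T (p v)
  -- an `a`-site outside `bad` still carries its particle, or its partner already does
  have key : ((univ.filter fun v => confA K L v = true) \ bad).card ≤
      nParticles K L (sweep T t) := by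
    refine Finset.card_le_card_of_injOn (fun v => if t ≤ T v then v else p v) ?_ ?_
    · intro v hv
      simp only [bad, Finset.coe_sdiff, Finset.coe_filter, Set.mem_sdiff, Set.mem_ofPred_eq,
        Finset.mem_univ, true_and, not_and, not_le] at hv
      simp only [Finset.coe_filter, Finset.mem_univ, true_and, Set.mem_ofPred_eq,
        sweep_eq_true_iff]
      split_ifs with h
      · exact Or.inl ⟨hv.1, h⟩
      · exact Or.inr ⟨hpB v hv.1, hv.2 hv.1 (by omega)⟩
    · intro v hv w hw hvw
      simp only [Finset.coe_sdiff, Finset.coe_filter, Set.mem_sdiff, Set.mem_ofPred_eq,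
        Finset.mem_univ, true_and] at hv hw
      simp only at hvw
      split_ifs at hvw
      · exact hvw
      · exact absurd ⟨hvw ▸ hv.1, hpB w hw.1⟩ (not_confA_and_confB _)
      · exact absurd ⟨hvw ▸ hw.1, hpB v hv.1⟩ (not_confA_and_confB _)
      · exact hp hvw
  have := Finset.card_le_card_sdiff_add_card (s := univ.filter fun v => confA K L v = true)
    (t := bad)
  unfold nParticles at key ⊢
  omega

theorem nParticles_sweep_add_card_le (T : Vert K L → ℕ) (t : ℕ)
    (hB : ∀ v, confB K L v = true → t ≤ T v) :
    nParticles K L (sweep T t) + (univ.filter fun v => confA K L v = true ∧ T v < t).card ≤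
      nParticles K L (confA K L) := by
  unfold nParticles
  rw [← Finset.card_union_of_disjoint]
  · refine Finset.card_le_card fun v hv => ?_
    simp only [Finset.mem_union, Finset.mem_filter, Finset.mem_univ, true_and,
      sweep_eq_true_iff] at hv ⊢
    rcases hv with (⟨hv, -⟩ | ⟨hv, hvt⟩) | ⟨hv, -⟩
    · exact hv
    · exact absurd (hB v hv) (by omega)
    · exact hv
  · refine Finset.disjoint_filter.2 fun v _ hv hvt => ?_
    rw [sweep_eq_true_iff] at hv
    rcases hv with ⟨-, hv⟩ | ⟨hv, -⟩
    · omega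
    · exact not_confA_and_confB v ⟨hvt.1, hv⟩

theorem le_card_filter_confA_lt (T : Vert K L → ℕ) {k : ℕ}
    (hsurj : ∀ s < k, ∃ v, confA K L v = true ∧ T v = s) :
    k ≤ (univ.filter fun v => confA K L v = true ∧ T v < k).card := by
  simpa using Finset.card_le_card_of_surjOn T (t := range k) fun s hs => by
    have hs : s < k := by simpa using hs
    obtain ⟨v, hv, rfl⟩ := hsurj s hs
    exact ⟨v, by simpa using ⟨hv, hs⟩, rfl⟩

namespace Schedule

variable (S : Schedule K L)

theorem card_filter_lt_le (m : ℕ) :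
    (univ.filter fun v => confA K L v = true ∧ S.T v < m).card ≤ m := by
  simpa using Finset.card_le_card_of_injOn S.T (t := range m) (fun v hv => by simp_all)
    (S.injOn.mono fun v hv => confA_ne_confB_of_confA (by simp_all))

theorem card_filter_eq_le_one (s : ℕ) :
    (univ.filter fun v => confA K L v = true ∧ S.T v = s).card ≤ 1 := by
  refine Finset.card_le_one.2 fun v hv w hw => ?_
  simp only [Finset.mem_filter, Finset.mem_univ, true_and] at hv hw
  exact S.injOn (confA_ne_confB_of_confA hv.1) (confA_ne_confB_of_confA hw.1)
    (hv.2.trans hw.2.symm)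

theorem card_filter_pending_le {m : ℕ} {p : Vert K L → Vert K L}
    (hp_succ : ∀ v, confA K L v = true → m ≤ S.T v → S.T (p v) = S.T v + 1) (t : ℕ) :
    (univ.filter fun v => confA K L v = true ∧ S.T v < t ∧ t ≤ S.T (p v)).card ≤ m + 1 := by
  calc _ ≤ ((univ.filter fun v => confA K L v = true ∧ S.T v < m) ∪
        univ.filter fun v => confA K L v = true ∧ S.T v = t - 1).card := by
        refine Finset.card_le_card fun v hv => ?_
        simp only [Finset.mem_union, Finset.mem_filter, Finset.mem_univ, true_and] at hv ⊢
        by_cases hvm : S.T v < m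
        · exact Or.inl ⟨hv.1, hvm⟩
        · have := hp_succ v hv.1 (by omega)
          exact Or.inr ⟨hv.1, by omega⟩
    _ ≤ m + 1 := (Finset.card_union_le _ _).trans
        (add_le_add (S.card_filter_lt_le m) (S.card_filter_eq_le_one _))

theorem pathHeight_toPath_sub_energy {m : ℕ} (hm : m < S.n) {p : Vert K L → Vert K L}
    (hpB : ∀ v, confA K L v = true → confB K L (p v) = true) (hp : Function.Injective p)
    (hp_succ : ∀ v, confA K L v = true → m ≤ S.T v → S.T (p v) = S.T v + 1)
    (hB : ∀ v, confB K L v = true → m < S.T v)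
    (hsurj : ∀ s ≤ m, ∃ v, confA K L v = true ∧ S.T v = s) :
    pathHeight K L S.toPath - energy K L (confA K L) = m + 1 := by
  have upper (t : ℕ) : nParticles K L (confA K L) ≤ nParticles K L (sweep S.T t) + (m + 1) :=
    (nParticles_confA_le_sweep_add S.T t hpB hp).trans
      (Nat.add_le_add_left (S.card_filter_pending_le hp_succ t) _)
  have lower : nParticles K L (sweep S.T (m + 1)) + (m + 1) ≤ nParticles K L (confA K L) :=
    le_trans (Nat.add_le_add_left
        (le_card_filter_confA_lt S.T fun s hs => hsurj s (Nat.le_of_lt_succ hs)) _)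
      (nParticles_sweep_add_card_le S.T (m + 1) hB)
  have height : pathHeight K L S.toPath = -(nParticles K L (confA K L) : ℤ) + (m + 1) := by
    refine le_antisymm (Finset.sup'_le _ _ fun t _ => ?_)
      (le_trans ?_ (Finset.le_sup' _ (Finset.mem_univ ⟨m + 1, by simp [toPath]; omega⟩)))
    · have := upper t
      simp only [energy, toPath]
      omega
    · simp only [energy, toPath]
      omega
  rw [height, energy]
  ring

end Schedule

end Height

theorem Nat.eq_and_eq_of_mul_add_eq {M y y' s s' : ℕ} (hs : s < M) (hs' : s' < M)
    (h : y * M + s = y' * M + s') : y = y' ∧ s = s' := by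
  have hM : 0 < M := by omega
  have h₁ := (Nat.div_mod_unique (a := y * M + s) (d := y) (c := s) hM).2 ⟨by ring, hs⟩
  have h₂ := (Nat.div_mod_unique (a := y' * M + s') (d := y') (c := s') hM).2 ⟨by ring, hs'⟩
  rw [h] at h₁
  exact ⟨h₁.1.symm.trans h₂.1, h₁.2.symm.trans h₂.2⟩

section ColumnSweep

variable {K L}

/-- First empty the `a`-column `0`; then, column pair by column pair and row by row, remove the
`a`-particle at `(i, 3y + 3)` and immediately add the `b`-particle at `(i, 3y + 1)`. The value on
`c`-sites is irrelevant. -/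
def colSchedule (v : Vert K L) : ℕ :=
  if v.1.2.val = 0 then v.1.1.val / 2
  else if v.1.2.val % 3 = 0 then K + (v.1.2.val / 3 - 1) * (2 * K) + 2 * (v.1.1.val / 2)
  else K + v.1.2.val / 3 * (2 * K) + 2 * (v.1.1.val / 2) + 1

/-- Away from column `0` the time is written in base `2K`: the last digit `2r + e` records the
row pair `r` and whether the site is an `a`-site (`e = 0`) or a `b`-site (`e = 1`). -/
theorem colSchedule_cases {v : Vert K L} (hv : confA K L v ≠ confB K L v) :
    (v.1.2.val = 0 ∧ v.1.1.val = 2 * colSchedule v) ∨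
    ∃ y r e, r < K ∧ e < 2 ∧ y < 2 * L ∧ v.1.1.val = 2 * r + (y + 1) % 2 ∧
      v.1.2.val + 2 * e = 3 * y + 3 ∧ colSchedule v = K + y * (2 * K) + (2 * r + e) := by
  rw [confA_ne_confB_iff] at hv
  have := v.row_lt
  have := v.col_lt
  have := v.parity
  by_cases h₀ : v.1.2.val = 0
  · left
    simp only [colSchedule, if_pos h₀]
    omega
  by_cases h₃ : v.1.2.val % 3 = 0
  · refine Or.inr ⟨v.1.2.val / 3 - 1, v.1.1.val / 2, 0, by omega, by omega, by omega, by omega,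
      by omega, ?_⟩
    simp only [colSchedule, if_neg h₀, if_pos h₃]
    omega
  · refine Or.inr ⟨v.1.2.val / 3, v.1.1.val / 2, 1, by omega, by omega, by omega, by omega,
      by omega, ?_⟩
    simp only [colSchedule, if_neg h₀, if_neg h₃]
    omega

theorem colSchedule_lt {v : Vert K L} (hv : confA K L v ≠ confB K L v) :
    colSchedule v < K + 2 * L * (2 * K) := by
  rcases colSchedule_cases hv with ⟨-, hvT⟩ | ⟨y, r, e, hr, he, hy, -, -, hvT⟩
  · have := v.row_lt
    have : 1 * (2 * K) ≤ 2 * L * (2 * K) := Nat.mul_le_mul_right _ (by have := NeZero.ne L; omega)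
    omega
  · have h₁ : (y + 1) * (2 * K) ≤ 2 * L * (2 * K) := Nat.mul_le_mul_right _ hy
    have h₂ : (y + 1) * (2 * K) = y * (2 * K) + 2 * K := by ring
    omega

theorem colSchedule_injOn :
    Set.InjOn colSchedule {v : Vert K L | confA K L v ≠ confB K L v} := by
  intro v hv w hw h
  have := v.row_lt
  have := w.row_lt
  rcases colSchedule_cases hv with ⟨hv₀, hvT⟩ | ⟨y, r, e, hr, he, hy, hvi, hvj, hvT⟩ <;>
    rcases colSchedule_cases hw with
      ⟨hw₀, hwT⟩ | ⟨y', r', e', hr', he', hy', hwi, hwj, hwT⟩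
  · exact vert_ext (by omega) (by omega)
  · omega
  · omega
  · obtain ⟨rfl, -⟩ := Nat.eq_and_eq_of_mul_add_eq (M := 2 * K) (y := y) (y' := y')
      (s := 2 * r + e) (s' := 2 * r' + e') (by omega) (by omega) (by omega)
    exact vert_ext (by omega) (by omega)

theorem colSchedule_le_of_adj {v w : Vert K L} (h : Adj K L v w) (hv : confA K L v = true)
    (hw : confB K L w = true) : colSchedule v ≤ colSchedule w := by
  have hadj := h.val_cases
  have := v.row_lt
  have := v.col_lt
  have := w.row_lt
  have := w.col_lt
  have hva := (confA_eq_true_iff v).1 hv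
  have hwb := (confB_eq_true_iff w).1 hw
  rcases colSchedule_cases (confA_ne_confB_of_confA hv) with
    ⟨hv₀, hvT⟩ | ⟨y, r, e, hr, he, hy, hvi, hvj, hvT⟩ <;>
    rcases colSchedule_cases (confA_ne_confB_of_confB hw) with
      ⟨hw₀, hwT⟩ | ⟨y', r', e', hr', he', hy', hwi, hwj, hwT⟩
  · omega
  · omega
  · omega
  · by_cases hyy : y' = y
    · subst hyy
      omega
    · have h₁ : (y + 1) * (2 * K) ≤ y' * (2 * K) := Nat.mul_le_mul_right _ (by omega)
      have h₂ : (y + 1) * (2 * K) = y * (2 * K) + 2 * K := by ring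
      omega

variable (K L) in
def colSweep : Schedule K L where
  T := colSchedule
  n := K + 2 * L * (2 * K)
  lt _ := colSchedule_lt
  injOn := colSchedule_injOn
  le_of_adj _ _ := colSchedule_le_of_adj

def colPartner : Vert K L → Vert K L := shift 0 (6 * L - 2) (by omega)

theorem colPartner_val (v : Vert K L) : (colPartner v).1.1.val = v.1.1.val ∧
    ((colPartner v).1.2.val + 2 = v.1.2.val ∨
      (colPartner v).1.2.val = v.1.2.val + 6 * L - 2) := by
  have := shift_row_val (a := 0) (6 * L - 2) (by omega) (by have := NeZero.ne K; omega) v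
  have := shift_col_val 0 (b := 6 * L - 2) (by omega) (by have := NeZero.ne L; omega) v
  have := v.row_lt
  have := v.col_lt
  have := NeZero.ne L
  unfold colPartner
  omega

theorem confB_colPartner {v : Vert K L} (hv : confA K L v = true) :
    confB K L (colPartner v) = true := by
  rw [confA_eq_true_iff] at hv
  rw [confB_eq_true_iff]
  have := (colPartner_val v).2
  have := NeZero.ne L
  omega

theorem colSchedule_colPartner {v : Vert K L} (hv : confA K L v = true)
    (hK : K ≤ colSchedule v) :
    colSchedule (colPartner v) = colSchedule v + 1 := by
  have hp := confB_colPartner hv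
  have hvp := colPartner_val v
  have := v.row_lt
  have := v.col_lt
  have := (colPartner v).col_lt
  rcases colSchedule_cases (confA_ne_confB_of_confA hv) with
    ⟨-, hvT⟩ | ⟨y, r, e, hr, he, hy, hvi, hvj, hvT⟩
  · omega
  rcases colSchedule_cases (confA_ne_confB_of_confB hp) with
    ⟨hp₀, -⟩ | ⟨y', r', e', hr', he', hy', hpi, hpj, hpT⟩
  · rw [confB_eq_true_iff] at hp
    omega
  rw [confA_eq_true_iff] at hv
  obtain rfl : y' = y := by omega
  omega

theorem lt_colSchedule_of_confB {v : Vert K L} (hv : confB K L v = true) : K < colSchedule v := by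
  have hvb := (confB_eq_true_iff v).1 hv
  rcases colSchedule_cases (confA_ne_confB_of_confB hv) with
    ⟨hv₀, -⟩ | ⟨y, r, e, hr, he, hy, hvi, hvj, hvT⟩ <;> omega

theorem exists_confA_colSchedule_eq {s : ℕ} (hs : s ≤ K) :
    ∃ v : Vert K L, confA K L v = true ∧ colSchedule v = s := by
  have := NeZero.ne K
  have := NeZero.ne L
  rcases hs.lt_or_eq with hs | hs
  · obtain ⟨v, hi, hj⟩ := exists_vert (K := K) (L := L) (i := 2 * s) (j := 0) (by omega)
      (by omega) (by omega)
    refine ⟨v, by rw [confA_eq_true_iff]; omega, ?_⟩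
    simp only [colSchedule, hi, hj, if_true]
    omega
  · obtain ⟨v, hi, hj⟩ := exists_vert (K := K) (L := L) (i := 1) (j := 3) (by omega) (by omega)
      (by omega)
    refine ⟨v, by rw [confA_eq_true_iff]; omega, ?_⟩
    simp [colSchedule, hi, hj, hs]

theorem pathHeight_colSweep_sub_energy :
    pathHeight K L (colSweep K L).toPath - energy K L (confA K L) = K + 1 := by
  have : 0 < 2 * L * (2 * K) :=
    Nat.mul_pos (by have := NeZero.ne L; omega) (by have := NeZero.ne K; omega)
  exact (colSweep K L).pathHeight_toPath_sub_energy (by simp only [colSweep]; omega)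
    (fun _ => confB_colPartner) (shift_injective _ _ _) (fun _ => colSchedule_colPartner)
    (fun _ => lt_colSchedule_of_confB) (fun _ => exists_confA_colSchedule_eq)

end ColumnSweep

section RowSweep

variable {K L}

/-- First empty the `a`-sites of rows `0` and `1`; then, row by row and column pair by column pair,
remove the `a`-particle at `(y + 1, j)` and immediately add the `b`-particle at `(y, j + 1)`. The
`b`-particles of row `0` come last, as if it were row `2K`. The value on `c`-sites is
irrelevant. -/
def rowSchedule (v : Vert K L) : ℕ :=
  if v.1.2.val % 3 = 0 then
    if v.1.1.val ≤ 1 then v.1.2.val / 3 else (v.1.1.val - 1) * (2 * L) + 2 * (v.1.2.val / 6)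
  else (if v.1.1.val = 0 then 2 * K else v.1.1.val) * (2 * L) + 2 * (v.1.2.val / 6) + 1

/-- Away from the first two `a`-rows the time is written in base `2L`, as for `colSchedule`. -/
theorem rowSchedule_cases {v : Vert K L} (hv : confA K L v ≠ confB K L v) :
    (v.1.1.val ≤ 1 ∧ v.1.2.val = 3 * rowSchedule v ∧ rowSchedule v < 2 * L) ∨
    ∃ y q e, 1 ≤ y ∧ y ≤ 2 * K ∧ q < L ∧ e < 2 ∧
      (v.1.1.val + e = y + 1 ∨ (e = 1 ∧ v.1.1.val + 2 * K = y)) ∧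
      v.1.2.val = 3 * (2 * q + (y + 1) % 2) + e ∧ rowSchedule v = y * (2 * L) + (2 * q + e) := by
  rw [confA_ne_confB_iff] at hv
  have := v.row_lt
  have := v.col_lt
  have := v.parity
  by_cases h₃ : v.1.2.val % 3 = 0
  · by_cases h₁ : v.1.1.val ≤ 1
    · left
      simp only [rowSchedule, if_pos h₃, if_pos h₁]
      omega
    · refine Or.inr ⟨v.1.1.val - 1, v.1.2.val / 6, 0, by omega, by omega, by omega, by omega,
        by omega, by omega, ?_⟩
      simp only [rowSchedule, if_pos h₃, if_neg h₁]
      omega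
  · by_cases h₀ : v.1.1.val = 0
    · refine Or.inr ⟨2 * K, v.1.2.val / 6, 1, by omega, by omega, by omega, by omega,
        by omega, by omega, ?_⟩
      simp only [rowSchedule, if_neg h₃, if_pos h₀]
      omega
    · refine Or.inr ⟨v.1.1.val, v.1.2.val / 6, 1, by omega, by omega, by omega, by omega,
        by omega, by omega, ?_⟩
      simp only [rowSchedule, if_neg h₃, if_neg h₀]
      omega

theorem rowSchedule_lt {v : Vert K L} (hv : confA K L v ≠ confB K L v) :
    rowSchedule v < (2 * K + 1) * (2 * L) := by
  rcases rowSchedule_cases hv with ⟨-, -, hvT⟩ | ⟨y, q, e, hy, hy', hq, he, -, -, hvT⟩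
  · have : 1 * (2 * L) ≤ (2 * K + 1) * (2 * L) := Nat.mul_le_mul_right _ (by omega)
    omega
  · have h₁ : (y + 1) * (2 * L) ≤ (2 * K + 1) * (2 * L) := Nat.mul_le_mul_right _ (by omega)
    have h₂ : (y + 1) * (2 * L) = y * (2 * L) + 2 * L := by ring
    omega

theorem rowSchedule_injOn :
    Set.InjOn rowSchedule {v : Vert K L | confA K L v ≠ confB K L v} := by
  intro v hv w hw h
  have := v.row_lt
  have := w.row_lt
  have := v.parity
  have := w.parity
  rcases rowSchedule_cases hv with
    ⟨hvi, hvj, hvT⟩ | ⟨y, q, e, hy, hy', hq, he, hvi, hvj, hvT⟩ <;>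
    rcases rowSchedule_cases hw with
      ⟨hwi, hwj, hwT⟩ | ⟨y', q', e', hz, hz', hq', he', hwi, hwj, hwT⟩
  · exact vert_ext (by omega) (by omega)
  · have : 1 * (2 * L) ≤ y' * (2 * L) := Nat.mul_le_mul_right _ hz
    omega
  · have : 1 * (2 * L) ≤ y * (2 * L) := Nat.mul_le_mul_right _ hy
    omega
  · obtain ⟨rfl, -⟩ := Nat.eq_and_eq_of_mul_add_eq (M := 2 * L) (y := y) (y' := y')
      (s := 2 * q + e) (s' := 2 * q' + e') (by omega) (by omega) (by omega)
    exact vert_ext (by omega) (by omega)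

theorem rowSchedule_le_of_adj {v w : Vert K L} (h : Adj K L v w) (hv : confA K L v = true)
    (hw : confB K L w = true) : rowSchedule v ≤ rowSchedule w := by
  have hadj := h.val_cases
  have := v.row_lt
  have := v.col_lt
  have := w.row_lt
  have := w.col_lt
  have hva := (confA_eq_true_iff v).1 hv
  have hwb := (confB_eq_true_iff w).1 hw
  rcases rowSchedule_cases (confA_ne_confB_of_confA hv) with
    ⟨hvi, hvj, hvT⟩ | ⟨y, q, e, hy, hy', hq, he, hvi, hvj, hvT⟩ <;>
    rcases rowSchedule_cases (confA_ne_confB_of_confB hw) with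
      ⟨hwi, hwj, hwT⟩ | ⟨y', q', e', hz, hz', hq', he', hwi, hwj, hwT⟩
  · omega
  · have : 1 * (2 * L) ≤ y' * (2 * L) := Nat.mul_le_mul_right _ hz
    omega
  · omega
  · by_cases hyy : y' = y
    · subst hyy
      omega
    · have h₁ : (y + 1) * (2 * L) ≤ y' * (2 * L) := Nat.mul_le_mul_right _ (by omega)
      have h₂ : (y + 1) * (2 * L) = y * (2 * L) + 2 * L := by ring
      omega

variable (K L) in
def rowSweep : Schedule K L where
  T := rowSchedule
  n := (2 * K + 1) * (2 * L)
  lt _ := rowSchedule_lt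
  injOn := rowSchedule_injOn
  le_of_adj _ _ := rowSchedule_le_of_adj

def rowPartner : Vert K L → Vert K L := shift (2 * K - 1) 1 (by have := NeZero.ne K; omega)

theorem rowPartner_val (v : Vert K L) :
    ((rowPartner v).1.1.val + 1 = v.1.1.val ∨
        (v.1.1.val = 0 ∧ (rowPartner v).1.1.val = 2 * K - 1)) ∧
      ((rowPartner v).1.2.val = v.1.2.val + 1 ∨
        (v.1.2.val = 6 * L - 1 ∧ (rowPartner v).1.2.val = 0)) := by
  have := NeZero.ne K
  have := NeZero.ne L
  have := shift_row_val (a := 2 * K - 1) 1 (by omega) (by omega) v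
  have := shift_col_val (2 * K - 1) (b := 1) (by omega) (by omega) v
  have := v.row_lt
  have := v.col_lt
  have := (rowPartner v).row_lt
  have := (rowPartner v).col_lt
  unfold rowPartner at *
  omega

theorem confB_rowPartner {v : Vert K L} (hv : confA K L v = true) :
    confB K L (rowPartner v) = true := by
  rw [confA_eq_true_iff] at hv
  rw [confB_eq_true_iff]
  have := (rowPartner_val v).2
  have := NeZero.ne L
  omega

theorem rowSchedule_rowPartner {v : Vert K L} (hv : confA K L v = true)
    (hL : 2 * L ≤ rowSchedule v) :
    rowSchedule (rowPartner v) = rowSchedule v + 1 := by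
  have hp := confB_rowPartner hv
  have hvp := rowPartner_val v
  have := v.row_lt
  have := v.col_lt
  have := (rowPartner v).row_lt
  rcases rowSchedule_cases (confA_ne_confB_of_confA hv) with
    ⟨-, -, hvT⟩ | ⟨y, q, e, hy, hy', hq, he, hvi, hvj, hvT⟩
  · omega
  rcases rowSchedule_cases (confA_ne_confB_of_confB hp) with
    ⟨-, hpj, -⟩ | ⟨y', q', e', hz, hz', hq', he', hpi, hpj, hpT⟩
  · rw [confB_eq_true_iff] at hp
    omega
  rw [confA_eq_true_iff] at hv
  rw [confB_eq_true_iff] at hp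
  obtain rfl : y' = y := by omega
  omega

theorem lt_rowSchedule_of_confB {v : Vert K L} (hv : confB K L v = true) :
    2 * L < rowSchedule v := by
  have hvb := (confB_eq_true_iff v).1 hv
  rcases rowSchedule_cases (confA_ne_confB_of_confB hv) with
    ⟨-, hvj, -⟩ | ⟨y, q, e, hy, hy', hq, he, hvi, hvj, hvT⟩
  · omega
  · have : 1 * (2 * L) ≤ y * (2 * L) := Nat.mul_le_mul_right _ hy
    omega

theorem exists_confA_rowSchedule_eq (hK : 2 ≤ K) {s : ℕ} (hs : s ≤ 2 * L) :
    ∃ v : Vert K L, confA K L v = true ∧ rowSchedule v = s := by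
  rcases hs.lt_or_eq with hs | hs
  · obtain ⟨v, hi, hj⟩ := exists_vert (K := K) (L := L) (i := s % 2) (j := 3 * s) (by omega)
      (by omega) (by omega)
    refine ⟨v, by rw [confA_eq_true_iff]; omega, ?_⟩
    simp only [rowSchedule, hi, hj]
    split_ifs <;> omega
  · obtain ⟨v, hi, hj⟩ := exists_vert (K := K) (L := L) (i := 2) (j := 0) (by omega)
      (by have := NeZero.ne L; omega) (by omega)
    refine ⟨v, by rw [confA_eq_true_iff]; omega, ?_⟩
    simp [rowSchedule, hi, hj, hs]

theorem pathHeight_rowSweep_sub_energy (hK : 2 ≤ K) :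
    pathHeight K L (rowSweep K L).toPath - energy K L (confA K L) = 2 * L + 1 := by
  have : 1 * (2 * L) < (2 * K + 1) * (2 * L) :=
    Nat.mul_lt_mul_of_pos_right (by omega) (by have := NeZero.ne L; omega)
  exact (rowSweep K L).pathHeight_toPath_sub_energy (by simp only [rowSweep]; omega)
    (fun _ => confB_rowPartner) (shift_injective _ _ _) (fun _ => rowSchedule_rowPartner)
    (fun _ => lt_rowSchedule_of_confB) (fun _ => exists_confA_rowSchedule_eq hK)

end RowSweep

theorem reference_path :
    ∃ p : HCPath K L (confA K L) (confB K L),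
      pathHeight K L p - energy K L (confA K L) = ((min K (2 * L) : ℕ) : ℤ) + 1 := by
  rcases le_or_gt K (2 * L) with h | h
  · exact ⟨_, by rw [pathHeight_colSweep_sub_energy, min_eq_left h]⟩
  · have hK : 2 ≤ K := by
      have := NeZero.ne L
      omega
    exact ⟨_, by rw [pathHeight_rowSweep_sub_energy hK, min_eq_right h.le]; push_cast; ring⟩
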